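/- arXiv:quant-ph/0401026 — 2 statements merged into one kernel-verified Lean document; each statement's English description precedes it below -/
import Mathlib

section
/- Let Φ : M_d(ℂ) → M_{d'}(ℂ) be a completely positive linear map. Then the supremum of ‖Φ(A)‖₂ / ‖A‖₂ over all nonzero Hermitian matrices A equals the supremum over all nonzero complex matrices A; that is, ‖Φ‖_{2→2}^R = ‖Φ‖_{2→2}. -/
open scoped Kronecker ComplexOrder
open Matrix

/-- Frobenius (Hilbert–Schmidt) norm ‖A‖₂ = (Tr A†A)^{1/2}. -/
noncomputable def frob {m n : Type*} [Fintype m] [Fintype n] (A : Matrix m n ℂ) : ℝ :=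
  Real.sqrt ((Aᴴ * A).trace.re)

/-- ‖Φ‖_{2→2} = sup_{A ≠ 0} ‖Φ(A)‖₂ / ‖A‖₂. -/
noncomputable def norm22 {m m' : Type*} [Fintype m] [Fintype m']
    (Φ : Matrix m m ℂ →ₗ[ℂ] Matrix m' m' ℂ) : ℝ :=
  sSup {r | ∃ A, A ≠ 0 ∧ r = frob (Φ A) / frob A}

/-- Choi matrix ∑_{j,k} E_{jk} ⊗ Φ(E_{jk}) of a linear map between matrix algebras. -/
noncomputable def choi {m m' : Type*} [Fintype m] [DecidableEq m] [Fintype m']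
    (Φ : Matrix m m ℂ →ₗ[ℂ] Matrix m' m' ℂ) : Matrix (m × m') (m × m') ℂ :=
  ∑ j, ∑ k, (single j k (1 : ℂ)) ⊗ₖ Φ (single j k 1)

/-- A linear map between matrix algebras is completely positive iff its Choi matrix is
positive semidefinite. -/
def IsCPMap {m m' : Type*} [Fintype m] [DecidableEq m] [Fintype m']
    (Φ : Matrix m m ℂ →ₗ[ℂ] Matrix m' m' ℂ) : Prop :=
  (choi Φ).PosSemidef

/-- Schatten p-norm ‖A‖_p = (Tr |A|^p)^{1/p}, computed through the singular values of A,
i.e. the square roots of the eigenvalues of A†A. -/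
noncomputable def schatten {m n : Type*} [Fintype m] [Fintype n] [DecidableEq n]
    (p : ℝ) (A : Matrix m n ℂ) : ℝ :=
  (∑ i, Real.sqrt ((isHermitian_conjTranspose_mul_self A).eigenvalues i) ^ p) ^ (1 / p)

/-- ν₂(Φ) = sup { ‖Φ(ρ)‖₂ : ρ positive semidefinite, Tr ρ = 1 }. -/
noncomputable def nu2 {m m' : Type*} [Fintype m] [Fintype m']
    (Φ : Matrix m m ℂ →ₗ[ℂ] Matrix m' m' ℂ) : ℝ :=
  sSup {r | ∃ ρ : Matrix m m ℂ, ρ.PosSemidef ∧ ρ.trace = 1 ∧ r = frob (Φ ρ)}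

/-- ν_p(Φ) = sup { ‖Φ(ρ)‖_p : ρ positive semidefinite, Tr ρ = 1 }. -/
noncomputable def nup (p : ℝ) {m m' : Type*} [Fintype m] [Fintype m'] [DecidableEq m']
    (Φ : Matrix m m ℂ →ₗ[ℂ] Matrix m' m' ℂ) : ℝ :=
  sSup {r | ∃ ρ : Matrix m m ℂ, ρ.PosSemidef ∧ ρ.trace = 1 ∧ r = schatten p (Φ ρ)}

/-- The Pauli matrices σ₁, σ₂, σ₃ (indexed by `Fin 3`). -/
noncomputable def pauli : Fin 3 → Matrix (Fin 2) (Fin 2) ℂ :=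
  ![!![0, 1; 1, 0], !![0, -Complex.I; Complex.I, 0], !![1, 0; 0, -1]]

/-!
The Choi matrix of a completely positive map is Hermitian, so Φ commutes with `ᴴ`. Writing
A = H + iK with H, K Hermitian, Φ A = Φ H + i Φ K is then again such a decomposition, and for
Hermitian H, K the cross terms of ‖H + iK‖₂² are traceless: ‖H + iK‖₂² = ‖H‖₂² + ‖K‖₂².
Hence a bound ‖Φ H‖₂ ≤ c ‖H‖₂ on Hermitian matrices gives ‖Φ A‖₂ ≤ c ‖A‖₂ for all A.
-/

attribute [local instance] Matrix.frobeniusNormedAddCommGroup Matrix.frobeniusNormedSpace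

open ComplexStarModule

section Frobenius

variable {m n : Type*} [Fintype m] [Fintype n]

lemma re_trace_conjTranspose_mul_self (A : Matrix m n ℂ) :
    (Aᴴ * A).trace.re = ∑ i, ∑ j, ‖A i j‖ ^ 2 := by
  simp only [Matrix.trace, Matrix.diag, Matrix.mul_apply, Matrix.conjTranspose_apply,
    Complex.re_sum, Complex.star_def, ← Complex.normSq_eq_conj_mul_self, Complex.ofReal_re,
    Complex.normSq_eq_norm_sq]
  exact Finset.sum_comm

lemma frob_sq (A : Matrix m n ℂ) : frob A ^ 2 = (Aᴴ * A).trace.re :=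
  Real.sq_sqrt (re_trace_conjTranspose_mul_self A ▸ by positivity)

lemma frob_eq_norm (A : Matrix m n ℂ) : frob A = ‖A‖ := by
  rw [frob, Matrix.frobenius_norm_def, re_trace_conjTranspose_mul_self, Real.sqrt_eq_rpow]
  norm_num [Real.rpow_natCast]

lemma frob_nonneg (A : Matrix m n ℂ) : 0 ≤ frob A := Real.sqrt_nonneg _

lemma frob_pos {A : Matrix m n ℂ} (hA : A ≠ 0) : 0 < frob A :=
  frob_eq_norm A ▸ norm_pos_iff.mpr hA

end Frobenius

lemma frob_add_I_smul_sq {n : Type*} [Fintype n] {H K : Matrix n n ℂ}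
    (hH : H.IsHermitian) (hK : K.IsHermitian) :
    frob (H + Complex.I • K) ^ 2 = frob H ^ 2 + frob K ^ 2 := by
  have expand : (H + Complex.I • K)ᴴ * (H + Complex.I • K)
      = Hᴴ * H + Kᴴ * K + Complex.I • (H * K - K * H) := by
    rw [Matrix.conjTranspose_add, Matrix.conjTranspose_smul, hH.eq, hK.eq]
    simp only [Complex.star_def, Complex.conj_I, Matrix.add_mul, Matrix.mul_add,
      Matrix.smul_mul, Matrix.mul_smul]
    match_scalars <;> simp [← sq]
  rw [frob_sq, frob_sq, frob_sq, expand, Matrix.trace_add, Matrix.trace_add,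
    Matrix.trace_smul, Matrix.trace_sub, Matrix.trace_mul_comm H K, sub_self, smul_zero,
    add_zero, Complex.add_re]

section HermitianPreserving

variable {m m' : Type*} [Fintype m] [DecidableEq m] [Fintype m']

lemma choi_apply (Φ : Matrix m m ℂ →ₗ[ℂ] Matrix m' m' ℂ) (j k : m) (a b : m') :
    choi Φ (j, a) (k, b) = Φ (Matrix.single j k 1) a b := by
  simp [choi, Matrix.sum_apply, Matrix.single_apply, ite_and]

lemma map_single_one_swap_of_isHermitian_choi {Φ : Matrix m m ℂ →ₗ[ℂ] Matrix m' m' ℂ}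
    (h : (choi Φ).IsHermitian) (j k : m) :
    Φ (Matrix.single k j 1) = (Φ (Matrix.single j k 1))ᴴ := by
  ext a b
  rw [← choi_apply, ← h.apply, choi_apply, Matrix.conjTranspose_apply]

lemma map_conjTranspose_of_isHermitian_choi {Φ : Matrix m m ℂ →ₗ[ℂ] Matrix m' m' ℂ}
    (h : (choi Φ).IsHermitian) (X : Matrix m m ℂ) : Φ Xᴴ = (Φ X)ᴴ := by
  induction X using Matrix.induction_on' with
  | h_zero => simp
  | h_add p q hp hq => simp [hp, hq]
  | h_std_basis j k c =>
    have smul_single_one (i l : m) (a : ℂ) : Matrix.single i l a = a • Matrix.single i l 1 := by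
      simp
    rw [Matrix.conjTranspose_single, smul_single_one k j, smul_single_one j k, map_smul,
      map_smul, Matrix.conjTranspose_smul, map_single_one_swap_of_isHermitian_choi h]

end HermitianPreserving

section Bounds

variable {m m' : Type*} [Fintype m] [Fintype m']

lemma bddAbove_range_frob_map_div_frob (Φ : Matrix m m ℂ →ₗ[ℂ] Matrix m' m' ℂ) :
    BddAbove (Set.range fun A => frob (Φ A) / frob A) := by
  obtain ⟨C, hC, hbound⟩ := (LinearMap.toContinuousLinearMap Φ).bound
  refine ⟨C, ?_⟩
  rintro r ⟨A, rfl⟩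
  refine div_le_of_le_mul₀ (frob_nonneg A) hC.le ?_
  rw [frob_eq_norm, frob_eq_norm]
  exact hbound A

lemma frob_map_le_of_isHermitian {Φ : Matrix m m ℂ →ₗ[ℂ] Matrix m' m' ℂ}
    (hΦ : ∀ X, Φ Xᴴ = (Φ X)ᴴ) {c : ℝ} (hc : 0 ≤ c)
    (hbound : ∀ H : Matrix m m ℂ, H.IsHermitian → frob (Φ H) ≤ c * frob H) (A : Matrix m m ℂ) :
    frob (Φ A) ≤ c * frob A := by
  set H : Matrix m m ℂ := (ℜ A : Matrix m m ℂ)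
  set K : Matrix m m ℂ := (ℑ A : Matrix m m ℂ)
  have hH : H.IsHermitian := (ℜ A).2.isHermitian
  have hK : K.IsHermitian := (ℑ A).2.isHermitian
  have hΦH : (Φ H).IsHermitian := by rw [Matrix.IsHermitian, ← hΦ, hH.eq]
  have hΦK : (Φ K).IsHermitian := by rw [Matrix.IsHermitian, ← hΦ, hK.eq]
  have hA : A = H + Complex.I • K := (realPart_add_I_smul_imaginaryPart A).symm
  have hΦA : Φ A = Φ H + Complex.I • Φ K := by rw [hA, map_add, map_smul]
  rw [← pow_le_pow_iff_left₀ (frob_nonneg _) (mul_nonneg hc (frob_nonneg _)) two_ne_zero]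
  calc frob (Φ A) ^ 2 = frob (Φ H) ^ 2 + frob (Φ K) ^ 2 := by
        rw [hΦA, frob_add_I_smul_sq hΦH hΦK]
    _ ≤ (c * frob H) ^ 2 + (c * frob K) ^ 2 :=
        add_le_add (pow_le_pow_left₀ (frob_nonneg _) (hbound H hH) 2)
          (pow_le_pow_left₀ (frob_nonneg _) (hbound K hK) 2)
    _ = c ^ 2 * (frob H ^ 2 + frob K ^ 2) := by ring
    _ = (c * frob A) ^ 2 := by rw [hA, mul_pow, frob_add_I_smul_sq hH hK]

end Bounds

/-- For a completely positive map Φ, the 2→2 norm restricted to Hermitian matrices equals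
the unrestricted 2→2 norm: ‖Φ‖_{2→2}^R = ‖Φ‖_{2→2}. -/
theorem stmt2 {d d' : ℕ}
    (Φ : Matrix (Fin d) (Fin d) ℂ →ₗ[ℂ] Matrix (Fin d') (Fin d') ℂ)
    (hΦ : IsCPMap Φ) :
    sSup {r | ∃ A : Matrix (Fin d) (Fin d) ℂ, A.IsHermitian ∧ A ≠ 0 ∧ r = frob (Φ A) / frob A}
      = norm22 Φ := by
  rw [norm22]
  set S := {r | ∃ A : Matrix (Fin d) (Fin d) ℂ, A.IsHermitian ∧ A ≠ 0 ∧ r = frob (Φ A) / frob A}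
  set T := {r | ∃ A : Matrix (Fin d) (Fin d) ℂ, A ≠ 0 ∧ r = frob (Φ A) / frob A}
  have hTS : S ⊆ T := by rintro _ ⟨A, -, hA0, rfl⟩; exact ⟨A, hA0, rfl⟩
  have hT : BddAbove T :=
    (bddAbove_range_frob_map_div_frob Φ).mono <| by rintro _ ⟨A, -, rfl⟩; exact ⟨A, rfl⟩
  have hT_nonneg : ∀ r ∈ T, 0 ≤ r := by
    rintro _ ⟨A, -, rfl⟩; exact div_nonneg (frob_nonneg _) (frob_nonneg _)
  have hS_nonneg : 0 ≤ sSup S := Real.sSup_nonneg fun r hr => hT_nonneg r (hTS hr)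
  have hS_bound (H : Matrix (Fin d) (Fin d) ℂ) (hH : H.IsHermitian) :
      frob (Φ H) ≤ sSup S * frob H := by
    rcases eq_or_ne H 0 with rfl | hH0
    · simp [frob]
    rw [← div_le_iff₀ (frob_pos hH0)]
    exact le_csSup (hT.mono hTS) ⟨H, hH, hH0, rfl⟩
  refine le_antisymm (Real.sSup_le (fun r hr => le_csSup hT (hTS hr)) (Real.sSup_nonneg hT_nonneg))
    (Real.sSup_le ?_ hS_nonneg)
  rintro _ ⟨A, -, rfl⟩
  exact div_le_of_le_mul₀ (frob_nonneg A) hS_nonneg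
    (frob_map_le_of_isHermitian (map_conjTranspose_of_isHermitian_choi hΦ.1) hS_nonneg hS_bound A)
end

section
/- Let w, u ∈ ℝ³ and let A = I + ∑_k (w_k + i u_k) σ_k ∈ M₂(ℂ). Then (Tr|A|)² = 2( 1 + |w|² + |u|² + √( (1 − |w|² + |u|²)² + 4 (u·w)² ) ). -/
/-!
If `s₀, s₁` are the singular values of a `2 × 2` matrix `A`, then
`(Tr|A|)² = s₀² + s₁² + 2 s₀ s₁ = Tr(A†A) + 2 |det A|`.
For `A = a I + z·σ` with `z ∈ ℂ³` one computes `Tr(A†A) = 2 (|a|² + ∑ |z_k|²)` and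
`det A = a² − ∑ z_k²`; with `a = 1` and `z = w + i u`, `∑ z_k² = |w|² − |u|² + 2 i u·w`.
-/

open scoped Kronecker ComplexOrder
open Matrix

section Eigenvalues

variable {𝕜 n : Type*} [RCLike 𝕜] [Fintype n] [DecidableEq n]

theorem sum_eigenvalues_conjTranspose_mul_self (A : Matrix n n 𝕜) :
    ∑ i, (isHermitian_conjTranspose_mul_self A).eigenvalues i = RCLike.re (Aᴴ * A).trace := by
  simp [(isHermitian_conjTranspose_mul_self A).trace_eq_sum_eigenvalues]

theorem prod_eigenvalues_conjTranspose_mul_self (A : Matrix n n 𝕜) :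
    ∏ i, (isHermitian_conjTranspose_mul_self A).eigenvalues i = ‖A.det‖ ^ 2 := by
  apply RCLike.ofReal_injective (K := 𝕜)
  rw [RCLike.ofReal_prod, ← (isHermitian_conjTranspose_mul_self A).det_eq_prod_eigenvalues,
    det_mul, det_conjTranspose, RCLike.star_def, RCLike.conj_mul, RCLike.ofReal_pow]

end Eigenvalues

theorem schatten_one_eq_sum_sqrt_eigenvalues {n : Type*} [Fintype n] [DecidableEq n]
    (A : Matrix n n ℂ) :
    schatten 1 A = ∑ i, √((isHermitian_conjTranspose_mul_self A).eigenvalues i) := by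
  simp [schatten]

theorem schatten_one_sq_of_fin_two (A : Matrix (Fin 2) (Fin 2) ℂ) :
    schatten 1 A ^ 2 = (Aᴴ * A).trace.re + 2 * ‖A.det‖ := by
  have hnonneg := (posSemidef_conjTranspose_mul_self A).eigenvalues_nonneg
  have hsum := sum_eigenvalues_conjTranspose_mul_self A
  have hprod := prod_eigenvalues_conjTranspose_mul_self A
  rw [Fin.sum_univ_two, RCLike.re_to_complex] at hsum
  rw [Fin.prod_univ_two] at hprod
  rw [schatten_one_eq_sum_sqrt_eigenvalues, Fin.sum_univ_two, add_sq, Real.sq_sqrt (hnonneg 0),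
    Real.sq_sqrt (hnonneg 1), mul_assoc, ← Real.sqrt_mul (hnonneg 0), hprod,
    Real.sqrt_sq (norm_nonneg _)]
  linarith

section Pauli

variable (a : ℂ) (z : Fin 3 → ℂ)

theorem smul_one_add_sum_smul_pauli :
    a • 1 + ∑ k, z k • pauli k =
      !![a + z 2, z 0 - Complex.I * z 1; z 0 + Complex.I * z 1, a - z 2] := by
  ext i j
  fin_cases i <;> fin_cases j <;> simp [pauli, Fin.sum_univ_three] <;> ring

theorem det_smul_one_add_sum_smul_pauli :
    (a • 1 + ∑ k, z k • pauli k).det = a ^ 2 - ∑ k, z k ^ 2 := by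
  rw [smul_one_add_sum_smul_pauli, det_fin_two_of, Fin.sum_univ_three]
  linear_combination z 1 ^ 2 * Complex.I_sq

theorem re_trace_conjTranspose_mul_self_smul_one_add_sum_smul_pauli :
    (((a • 1 + ∑ k, z k • pauli k)ᴴ * (a • 1 + ∑ k, z k • pauli k)).trace).re =
      2 * (Complex.normSq a + ∑ k, Complex.normSq (z k)) := by
  rw [smul_one_add_sum_smul_pauli]
  simp only [trace_fin_two, Matrix.mul_apply, conjTranspose_apply, of_apply, cons_val',
    cons_val_zero, cons_val_one, cons_val_fin_one, RCLike.star_def, Fin.sum_univ_two,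
    Fin.sum_univ_three, map_add, map_sub, map_mul, Complex.conj_I, Complex.add_re,
    Complex.sub_re, Complex.mul_re, Complex.mul_im, Complex.conj_re, Complex.conj_im,
    Complex.add_im, Complex.sub_im, Complex.neg_re, Complex.neg_im, Complex.I_re, Complex.I_im,
    Complex.normSq_apply]
  ring

end Pauli

/-- For A = I + ∑_k (w_k + i u_k)σ_k one has
(Tr|A|)² = 2(1 + |w|² + |u|² + √((1 − |w|² + |u|²)² + 4(u·w)²)). -/
theorem stmt14 (w u : Fin 3 → ℝ) :
    schatten 1 (1 + ∑ k, ((w k : ℂ) + Complex.I * (u k : ℂ)) • pauli k) ^ 2 =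
      2 * (1 + (∑ k, w k ^ 2) + (∑ k, u k ^ 2) +
        Real.sqrt ((1 - (∑ k, w k ^ 2) + (∑ k, u k ^ 2)) ^ 2 +
          4 * (∑ k, u k * w k) ^ 2)) := by
  have hnormSq (k : Fin 3) : Complex.normSq (w k + Complex.I * u k) = w k ^ 2 + u k ^ 2 := by
    rw [mul_comm, Complex.normSq_add_mul_I]
  have hdet : 1 - ∑ k, ((w k : ℂ) + Complex.I * u k) ^ 2 =
      ((1 - ∑ k, w k ^ 2 + ∑ k, u k ^ 2 : ℝ) : ℂ) +
        ((-(2 * ∑ k, u k * w k) : ℝ) : ℂ) * Complex.I := by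
    simp only [Fin.sum_univ_three]
    push_cast
    linear_combination -(u 0 ^ 2 + u 1 ^ 2 + u 2 ^ 2 : ℂ) * Complex.I_sq
  rw [← one_smul ℂ (1 : Matrix (Fin 2) (Fin 2) ℂ), schatten_one_sq_of_fin_two,
    re_trace_conjTranspose_mul_self_smul_one_add_sum_smul_pauli,
    det_smul_one_add_sum_smul_pauli, one_pow, map_one, hdet, Complex.norm_add_mul_I]
  simp only [hnormSq, Finset.sum_add_distrib]
  ring_nf
end
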